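/- For all α, β, γ ≥ 0, the explicit rational expression for the vertex value of the scalar curvature s at (x,y) = (α/2π, 0) of a toric extremal Kähler metric on CP2 # 3 CP2-bar (24π times a degree-5 polynomial quotient, as displayed in Appendix B) is strictly positive when α, β, γ > 0, and both numerator and denominator have all nonnegative coefficients. -/
import Mathlib


/-- Numerator of the vertex value of the scalar curvature at (x,y) = (α/2π, 0)
for a toric extremal Kähler metric on ℂP₂ # 3 ℂP₂-bar (Kähler class (α,β,γ,1)),
as displayed in Appendix B. -/
noncomputable def vertexNum3 (α β γ : ℝ) : ℝ :=
  1 + 10*γ + 32*γ^2 + 48*γ^3 + 36*γ^4 + 8*γ^5 + 8*β^5*(1+γ)^4 +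
  8*α^5*(1 + β + γ)^4 +
  4*β^4*(9 + 44*γ + 80*γ^2 + 68*γ^3 + 25*γ^4 + 2*γ^5) +
  8*β^3*(6 + 37*γ + 80*γ^2 + 78*γ^3 + 34*γ^4 + 4*γ^5) +
  4*β^2*(8 + 60*γ + 147*γ^2 + 160*γ^3 + 80*γ^4 + 12*γ^5) +
  2*β*(5 + 44*γ + 120*γ^2 + 148*γ^3 + 88*γ^4 + 16*γ^5) +
  4*α^4*(5 + 2*β^5 + 24*γ + 40*γ^2 + 32*γ^3 + 13*γ^4 + 2*γ^5 +
    β^4*(19 + 18*γ) + β^3*(50 + 96*γ + 40*γ^2) +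
    2*β^2*(29 + 84*γ + 72*γ^2 + 20*γ^3) +
    2*β*(15 + 58*γ + 75*γ^2 + 42*γ^3 + 9*γ^4)) +
  8*α^3*(3 + 17*γ + 34*γ^2 + 35*γ^3 + 19*γ^4 + 4*γ^5 +
    4*β^5*(1+γ) + β^4*(25 + 48*γ + 20*γ^2) +
    β^3*(52 + 151*γ + 125*γ^2 + 30*γ^3) +
    β^2*(52 + 201*γ + 246*γ^2 + 122*γ^3 + 20*γ^4) +
    β*(23 + 110*γ + 177*γ^2 + 133*γ^3 + 45*γ^4 + 4*γ^5)) +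
  4*α^2*(4 + 28*γ + 69*γ^2 + 84*γ^3 + 52*γ^4 + 12*γ^5 +
    12*β^5*(1+γ)^2 + 2*β^4*(31 + 90*γ + 78*γ^2 + 20*γ^3) +
    2*β^3*(53 + 210*γ + 267*γ^2 + 128*γ^3 + 20*γ^4) +
    6*β^2*(15 + 75*γ + 123*γ^2 + 86*γ^3 + 25*γ^4 + 2*γ^5) +
    β*(35 + 210*γ + 420*γ^2 + 388*γ^3 + 168*γ^4 + 24*γ^5)) +
  2*α*(3 + 26*γ + 74*γ^2 + 100*γ^3 + 68*γ^4 + 16*γ^5 +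
    16*β^5*(1+γ)^3 +
    4*β^4*(19 + 74*γ + 99*γ^2 + 54*γ^3 + 9*γ^4) +
    4*β^3*(28 + 142*γ + 243*γ^2 + 175*γ^3 + 51*γ^4 + 4*γ^5) +
    2*β^2*(41 + 258*γ + 528*γ^2 + 470*γ^3 + 186*γ^4 + 24*γ^5) +
    β*(28 + 210*γ + 498*γ^2 + 536*γ^3 + 276*γ^4 + 48*γ^5))

/-- Denominator of the vertex value of the scalar curvature at (α/2π, 0) on
ℂP₂ # 3 ℂP₂-bar, as displayed in Appendix B. -/
noncomputable def vertexDen3 (α β γ : ℝ) : ℝ :=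
  1 + 10*γ + 36*γ^2 + 64*γ^3 + 60*γ^4 + 24*γ^5 +
  24*β^5*(1+γ)^5 + 24*α^5*(1 + β + γ)^5 +
  12*β^4*(1+γ)^2*(5 + 20*γ + 23*γ^2 + 10*γ^3) +
  16*β^3*(4 + 28*γ + 72*γ^2 + 90*γ^3 + 57*γ^4 + 15*γ^5) +
  12*β^2*(3 + 24*γ + 69*γ^2 + 96*γ^3 + 68*γ^4 + 20*γ^5) +
  2*β*(5 + 45*γ + 144*γ^2 + 224*γ^3 + 180*γ^4 + 60*γ^5) +
  12*α^4*(1 + β + γ)^2*(5 + 20*γ + 23*γ^2 + 10*γ^3 + 10*β^3*(1+γ) +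
    β^2*(23 + 46*γ + 16*γ^2) + 2*β*(10 + 30*γ + 23*γ^2 + 5*γ^3)) +
  16*α^3*(4 + 28*γ + 72*γ^2 + 90*γ^3 + 57*γ^4 + 15*γ^5 +
    15*β^5*(1+γ)^2 + 3*β^4*(19 + 57*γ + 50*γ^2 + 13*γ^3) +
    3*β^3*(30 + 120*γ + 155*γ^2 + 78*γ^3 + 13*γ^4) +
    3*β^2*(24 + 120*γ + 206*γ^2 + 155*γ^3 + 50*γ^4 + 5*γ^5) +
    β*(28 + 168*γ + 360*γ^2 + 360*γ^3 + 171*γ^4 + 30*γ^5)) +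
  12*α^2*(3 + 24*γ + 69*γ^2 + 96*γ^3 + 68*γ^4 + 20*γ^5 +
    20*β^5*(1+γ)^3 +
    β^4*(68 + 272*γ + 366*γ^2 + 200*γ^3 + 36*γ^4) +
    4*β^3*(24 + 120*γ + 206*γ^2 + 155*γ^3 + 50*γ^4 + 5*γ^5) +
    2*β*(12 + 84*γ + 207*γ^2 + 240*γ^3 + 136*γ^4 + 30*γ^5) +
    β^2*(69 + 414*γ + 864*γ^2 + 824*γ^3 + 366*γ^4 + 60*γ^5)) +
  2*α*(5 + 45*γ + 144*γ^2 + 224*γ^3 + 180*γ^4 + 60*γ^5 +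
    60*β^5*(1+γ)^4 +
    12*β^4*(15 + 75*γ + 136*γ^2 + 114*γ^3 + 43*γ^4 + 5*γ^5) +
    12*β^2*(12 + 84*γ + 207*γ^2 + 240*γ^3 + 136*γ^4 + 30*γ^5) +
    8*β^3*(28 + 168*γ + 360*γ^2 + 360*γ^3 + 171*γ^4 + 30*γ^5) +
    3*β*(15 + 120*γ + 336*γ^2 + 448*γ^3 + 300*γ^4 + 80*γ^5))

open Real in
/-- For α, β, γ ≥ 0 the numerator and denominator of the vertex scalar-curvature
expression 24π·vertexNum3/vertexDen3 on ℂP₂ # 3 ℂP₂-bar are nonnegative (indeed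
they have all nonnegative coefficients), and the expression is strictly positive
when α, β, γ > 0. -/
theorem vertex_scalar_curvature_pos (α β γ : ℝ)
    (hα : 0 ≤ α) (hβ : 0 ≤ β) (hγ : 0 ≤ γ) :
    0 ≤ vertexNum3 α β γ ∧ 0 ≤ vertexDen3 α β γ ∧
    (0 < α → 0 < β → 0 < γ →
      0 < 24 * π * vertexNum3 α β γ / vertexDen3 α β γ) := by
  have hN : 0 < vertexNum3 α β γ := by unfold vertexNum3; positivity
  have hD : 0 < vertexDen3 α β γ := by unfold vertexDen3; positivity
  exact ⟨hN.le, hD.le, fun _ _ _ => by positivity⟩
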